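/- arXiv:2202.12865 — 2 statements merged into one kernel-verified Lean document; each statement's English description precedes it below -/
import Mathlib

section
/- Let (X, W) be a cubature rule of algebraic degree 2(s+k) on the unit sphere S ⊆ ℝⁿ, h(t) = a_0 + a_2 t² + ⋯ + a_{2s} t^{2s} an even univariate polynomial nonnegative on [−1,1], and f a homogeneous polynomial of degree 2k with f(x) ≥ 0 for all x ∈ X. Then the polynomial Γ̂_h(f)(x) = Σ_j a_{2j} ‖x‖^{2(k−j)} ∫_S ⟨x,y⟩^{2j} f(y) dμ(y) is nonnegative at every point of S. -/
open MeasureTheory MvPolynomial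

/-- The Laplacian operator on polynomials in `n` variables. -/
noncomputable def laplacian (n : ℕ) : MvPolynomial (Fin n) ℝ →ₗ[ℝ] MvPolynomial (Fin n) ℝ :=
  ∑ i : Fin n,
    LinearMap.comp (MvPolynomial.pderiv i).toLinearMap (MvPolynomial.pderiv i).toLinearMap

/-- The space `H_j` of homogeneous harmonic polynomials of degree `j` in `n` variables. -/
noncomputable def harmonicSubmodule (n j : ℕ) : Submodule ℝ (MvPolynomial (Fin n) ℝ) :=
  MvPolynomial.homogeneousSubmodule (Fin n) ℝ j ⊓ LinearMap.ker (laplacian n)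

/-- `dim H_j`. -/
noncomputable def dimHarm (n j : ℕ) : ℕ := Module.finrank ℝ (harmonicSubmodule n j)

/-- The `(n-1)`-dimensional surface (Hausdorff) measure on `ℝⁿ`. -/
noncomputable def sphereMeasure (n : ℕ) : Measure (EuclideanSpace ℝ (Fin n)) := μH[(n:ℝ) - 1]

/-- The unit sphere `S ⊆ ℝⁿ`. -/
noncomputable def usphere (n : ℕ) : Set (EuclideanSpace ℝ (Fin n)) :=
  Metric.sphere (0 : EuclideanSpace ℝ (Fin n)) 1

/-- Evaluation of a polynomial at a point of `ℝⁿ`. -/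
noncomputable def evp {n : ℕ} (x : EuclideanSpace ℝ (Fin n)) (p : MvPolynomial (Fin n) ℝ) : ℝ :=
  MvPolynomial.eval (fun i => x i) p

/-- Euclidean inner product `⟨x, y⟩`. -/
noncomputable def ip {n : ℕ} (x y : EuclideanSpace ℝ (Fin n)) : ℝ := inner ℝ x y

/-- The polynomial `‖x‖² = x₁² + ⋯ + xₙ²`. -/
noncomputable def normsq (n : ℕ) : MvPolynomial (Fin n) ℝ := ∑ i : Fin n, (MvPolynomial.X i)^2

/-- The Gegenbauer polynomials `C_j^{(α)}`. -/
noncomputable def gegenbauer (a : ℝ) : ℕ → Polynomial ℝ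
  | 0 => 1
  | 1 => Polynomial.C (2*a) * Polynomial.X
  | (j+2) => Polynomial.C ((2*((j:ℝ)+1+a))/((j:ℝ)+2)) * Polynomial.X * gegenbauer a (j+1)
      - Polynomial.C (((j:ℝ)+2*a)/((j:ℝ)+2)) * gegenbauer a j

/-! Every term `⟨x, y⟩^{2j} f(y)` with `j ≤ s` is the restriction to the sphere of a form of degree
`2(s + k)`, namely `⟨x, ·⟩^{2j} ‖·‖^{2(s-j)} f`, so the cubature rule integrates it exactly.
Hence `Γ̂_h(f)(x) = Σ_{z ∈ X} W(z) f(z) h(⟨x, z⟩)`, a sum of nonnegative terms because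
`|⟨x, z⟩| ≤ 1` for `x, z ∈ S`. -/

/-- The exactness condition of a cubature rule of algebraic degree `d`. -/
def IsExactOnForms (n d : ℕ) (X : Finset (EuclideanSpace ℝ (Fin n)))
    (W : EuclideanSpace ℝ (Fin n) → ℝ) : Prop :=
  ∀ p : MvPolynomial (Fin n) ℝ, p.IsHomogeneous d →
    (∫ y in usphere n, evp y p ∂(sphereMeasure n)) = ∑ x ∈ X, W x * evp x p

lemma evp_mul {n : ℕ} (y : EuclideanSpace ℝ (Fin n)) (p q : MvPolynomial (Fin n) ℝ) :
    evp y (p * q) = evp y p * evp y q :=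
  map_mul _ p q

lemma evp_pow {n : ℕ} (y : EuclideanSpace ℝ (Fin n)) (p : MvPolynomial (Fin n) ℝ) (m : ℕ) :
    evp y (p ^ m) = evp y p ^ m :=
  map_pow _ p m

noncomputable def innerForm {n : ℕ} (x : EuclideanSpace ℝ (Fin n)) : MvPolynomial (Fin n) ℝ :=
  ∑ i, C (x i) * X i

lemma isHomogeneous_innerForm {n : ℕ} (x : EuclideanSpace ℝ (Fin n)) :
    (innerForm x).IsHomogeneous 1 :=
  IsHomogeneous.sum _ _ _ fun i _ => (isHomogeneous_X ℝ i).C_mul _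

lemma evp_innerForm {n : ℕ} (x y : EuclideanSpace ℝ (Fin n)) : evp y (innerForm x) = ip x y := by
  simp [innerForm, evp, ip, PiLp.inner_apply, mul_comm]

lemma isHomogeneous_normsq (n : ℕ) : (normsq n).IsHomogeneous 2 :=
  IsHomogeneous.sum _ _ _ fun i _ => isHomogeneous_X_pow i 2

lemma evp_normsq {n : ℕ} (y : EuclideanSpace ℝ (Fin n)) : evp y (normsq n) = ‖y‖ ^ 2 := by
  simp [evp, normsq, EuclideanSpace.norm_sq_eq]

lemma evp_normsq_of_mem_usphere {n : ℕ} {y : EuclideanSpace ℝ (Fin n)} (hy : y ∈ usphere n) :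
    evp y (normsq n) = 1 := by
  rw [evp_normsq, mem_sphere_zero_iff_norm.mp hy, one_pow]

lemma ip_mem_Icc_of_mem_usphere {n : ℕ} {x y : EuclideanSpace ℝ (Fin n)}
    (hx : x ∈ usphere n) (hy : y ∈ usphere n) : ip x y ∈ Set.Icc (-1 : ℝ) 1 := by
  have h := abs_real_inner_le_norm x y
  rw [mem_sphere_zero_iff_norm.mp hx, mem_sphere_zero_iff_norm.mp hy, one_mul] at h
  exact abs_le.mp h

/-- Multiplying by a power of `‖·‖²`, which is `1` on the sphere, lowers the degree of exactness
of a cubature rule in steps of two. -/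
lemma IsExactOnForms.integral_eq_sum {n d m i : ℕ} {X : Finset (EuclideanSpace ℝ (Fin n))}
    {W : EuclideanSpace ℝ (Fin n) → ℝ} (hcub : IsExactOnForms n d X W)
    (hXs : ∀ x ∈ X, x ∈ usphere n) {p : MvPolynomial (Fin n) ℝ} (hp : p.IsHomogeneous m)
    (hd : m + 2 * i = d) :
    (∫ y in usphere n, evp y p ∂(sphereMeasure n)) = ∑ x ∈ X, W x * evp x p := by
  have hev : ∀ y ∈ usphere n, evp y (p * normsq n ^ i) = evp y p := fun y hy => by
    rw [evp_mul, evp_pow, evp_normsq_of_mem_usphere hy, one_pow, mul_one]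
  calc (∫ y in usphere n, evp y p ∂(sphereMeasure n))
      = ∫ y in usphere n, evp y (p * normsq n ^ i) ∂(sphereMeasure n) :=
        setIntegral_congr_fun Metric.isClosed_sphere.measurableSet fun y hy => (hev y hy).symm
    _ = ∑ x ∈ X, W x * evp x (p * normsq n ^ i) :=
        hcub _ (hd ▸ hp.mul ((isHomogeneous_normsq n).pow i))
    _ = ∑ x ∈ X, W x * evp x p := Finset.sum_congr rfl fun x hx => by rw [hev x (hXs x hx)]

/-- if `f` is a form of degree `2k` nonnegative on the nodes of a cubature
rule of algebraic degree `2(s+k)` and `h(t) = Σ a_{2j} t^{2j}` is even and nonnegative on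
`[-1,1]`, then `Γ̂_h(f)` is nonnegative on the sphere. -/
theorem averaged_poly_nonneg
    (n s k : ℕ)
    (X : Finset (EuclideanSpace ℝ (Fin n))) (W : EuclideanSpace ℝ (Fin n) → ℝ)
    (hXs : ∀ x ∈ X, x ∈ usphere n) (hW : ∀ x ∈ X, 0 < W x)
    (hcub : ∀ p : MvPolynomial (Fin n) ℝ, p.IsHomogeneous (2*(s+k)) →
      (∫ y in usphere n, evp y p ∂(sphereMeasure n)) = ∑ x ∈ X, W x * evp x p)
    (a : ℕ → ℝ)
    (hpos : ∀ t : ℝ, t ∈ Set.Icc (-1:ℝ) 1 → 0 ≤ ∑ j ∈ Finset.range (s+1), a j * t^(2*j))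
    (f : MvPolynomial (Fin n) ℝ) (hf : f.IsHomogeneous (2*k))
    (hfX : ∀ x ∈ X, 0 ≤ evp x f) :
    ∀ x ∈ usphere n,
      0 ≤ ∑ j ∈ Finset.range (s+1), a j *
            ∫ y in usphere n, (ip x y)^(2*j) * evp y f ∂(sphereMeasure n) := by
  intro x hx
  have hterm : ∀ j ∈ Finset.range (s+1),
      (∫ y in usphere n, (ip x y)^(2*j) * evp y f ∂(sphereMeasure n))
        = ∑ z ∈ X, W z * ((ip x z)^(2*j) * evp z f) := fun j hj => by
    have hp := ((isHomogeneous_innerForm x).pow (2*j)).mul hf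
    have hd : 1 * (2*j) + 2*k + 2*(s-j) = 2*(s+k) := by have := Finset.mem_range.mp hj; omega
    simpa only [evp_mul, evp_pow, evp_innerForm] using IsExactOnForms.integral_eq_sum hcub hXs hp hd
  calc (0 : ℝ)
      ≤ ∑ z ∈ X, W z * evp z f * ∑ j ∈ Finset.range (s+1), a j * (ip x z)^(2*j) :=
        Finset.sum_nonneg fun z hz => mul_nonneg (mul_nonneg (hW z hz).le (hfX z hz))
          (hpos _ (ip_mem_Icc_of_mem_usphere hx (hXs z hz)))
    _ = ∑ j ∈ Finset.range (s+1), a j * ∑ z ∈ X, W z * ((ip x z)^(2*j) * evp z f) := by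
        simp only [Finset.mul_sum]
        rw [Finset.sum_comm]
        exact Finset.sum_congr rfl fun j _ => Finset.sum_congr rfl fun z _ => by ring
    _ = _ := Finset.sum_congr rfl fun j hj => by rw [hterm j hj]
end

section
/- Let α* = min_{x∈S} f(x) for a polynomial f of degree d, let (X_k, W_k) be a cubature rule of algebraic degree k on S, and let α_k^quad = min_{x∈X_k} f(x). Then for every sum of squares g of polynomials of degree at most t with ∫_S g dμ = 1 and k = d + 2t, one has ∫_S f g dμ ≥ α_k^quad ≥ α*. -/
open MeasureTheory MvPolynomial

/-! Cubature turns `∫ f g dμ` into a finite sum `∑ₓ W x g(x) f(x)`; since `g ≥ 0` and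
`∑ₓ W x g(x) = ∫ g dμ = 1`, this is an average of the values of `f` on the nodes, hence at least
their minimum, which in turn is at least the minimum of `f` over the sphere. -/

theorem MvPolynomial.totalDegree_sum_sq_le {σ R ι : Type*} [CommSemiring R] (s : Finset ι)
    (q : ι → MvPolynomial σ R) {t : ℕ} (hq : ∀ i ∈ s, (q i).totalDegree ≤ t) :
    (∑ i ∈ s, q i ^ 2).totalDegree ≤ 2 * t := by
  refine (totalDegree_finsetSum _ _).trans (Finset.sup_le fun i hi => ?_)
  calc (q i ^ 2).totalDegree ≤ 2 * (q i).totalDegree := totalDegree_pow _ _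
    _ ≤ 2 * t := Nat.mul_le_mul_left 2 (hq i hi)

theorem MvPolynomial.eval_sum_sq_nonneg {σ R ι : Type*} [CommRing R] [LinearOrder R]
    [IsStrictOrderedRing R] (s : Finset ι) (q : ι → MvPolynomial σ R) (x : σ → R) :
    0 ≤ eval x (∑ i ∈ s, q i ^ 2) := by
  simp only [map_sum, map_pow]
  exact Finset.sum_nonneg fun i _ => sq_nonneg _

theorem Finset.inf'_le_sum_mul_of_sum_eq_one {ι R : Type*} [CommRing R] [LinearOrder R]
    [IsStrictOrderedRing R] {s : Finset ι} (hs : s.Nonempty) (F w : ι → R)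
    (hw : ∀ i ∈ s, 0 ≤ w i) (hw1 : ∑ i ∈ s, w i = 1) :
    s.inf' hs F ≤ ∑ i ∈ s, w i * F i :=
  calc s.inf' hs F = ∑ i ∈ s, w i * s.inf' hs F := by rw [← Finset.sum_mul, hw1, one_mul]
    _ ≤ ∑ i ∈ s, w i * F i :=
      Finset.sum_le_sum fun i hi => mul_le_mul_of_nonneg_left (Finset.inf'_le _ hi) (hw i hi)

theorem cubature_upper_bound_dominates_general
    (n d t : ℕ)
    (f : MvPolynomial (Fin n) ℝ) (hd : f.totalDegree ≤ d)
    (αstar : ℝ) (hα : IsLeast {r : ℝ | ∃ x ∈ usphere n, evp x f = r} αstar)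
    (X : Finset (EuclideanSpace ℝ (Fin n))) (hXne : X.Nonempty)
    (W : EuclideanSpace ℝ (Fin n) → ℝ)
    (hXs : ∀ x ∈ X, x ∈ usphere n) (hW : ∀ x ∈ X, 0 < W x)
    (hcub : ∀ p : MvPolynomial (Fin n) ℝ, p.totalDegree ≤ d + 2*t →
      (∫ x in usphere n, evp x p ∂(sphereMeasure n)) = ∑ x ∈ X, W x * evp x p)
    (g : MvPolynomial (Fin n) ℝ) (N : ℕ) (q : Fin N → MvPolynomial (Fin n) ℝ)
    (hg : g = ∑ i : Fin N, (q i)^2) (hq : ∀ i, (q i).totalDegree ≤ t)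
    (hg1 : (∫ x in usphere n, evp x g ∂(sphereMeasure n)) = 1) :
    αstar ≤ X.inf' hXne (fun x => evp x f) ∧
      X.inf' hXne (fun x => evp x f)
        ≤ ∫ x in usphere n, evp x f * evp x g ∂(sphereMeasure n) := by
  refine ⟨Finset.le_inf' _ _ fun x hx => hα.2 ⟨x, hXs x hx, rfl⟩, ?_⟩
  have hg_deg : g.totalDegree ≤ 2 * t := hg ▸ totalDegree_sum_sq_le _ q fun i _ => hq i
  have hg_nonneg : ∀ x, 0 ≤ evp x g := fun x => hg ▸ eval_sum_sq_nonneg _ q _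
  have hfg : ∫ x in usphere n, evp x f * evp x g ∂(sphereMeasure n)
      = ∑ x ∈ X, W x * (evp x f * evp x g) := by
    simpa only [evp, map_mul] using hcub (f * g) ((totalDegree_mul f g).trans (by omega))
  have hweights : ∑ x ∈ X, W x * evp x g = 1 := by
    rw [← hg1, hcub g (by omega)]
  calc X.inf' hXne (fun x => evp x f) ≤ ∑ x ∈ X, W x * evp x g * evp x f :=
        Finset.inf'_le_sum_mul_of_sum_eq_one hXne _ _
          (fun x hx => mul_nonneg (hW x hx).le (hg_nonneg x)) hweights
    _ = _ := by rw [hfg]; exact Finset.sum_congr rfl fun x _ => by ring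

/-- for a cubature rule of algebraic degree `k = d + 2t`, the cubature
minimum `α_k^quad = min_{x∈X} f(x)` satisfies
`∫ f g dμ ≥ α_k^quad ≥ α* = min_{x∈S} f(x)` for every sum of squares `g` of polynomials
of degree ≤ t with `∫ g dμ = 1`. -/
theorem cubature_upper_bound_dominates
    (n d t : ℕ) (hn : 1 ≤ n)
    (f : MvPolynomial (Fin n) ℝ) (hd : f.totalDegree ≤ d)
    (αstar : ℝ) (hα : IsLeast {r : ℝ | ∃ x ∈ usphere n, evp x f = r} αstar)
    (X : Finset (EuclideanSpace ℝ (Fin n))) (hXne : X.Nonempty)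
    (W : EuclideanSpace ℝ (Fin n) → ℝ)
    (hXs : ∀ x ∈ X, x ∈ usphere n) (hW : ∀ x ∈ X, 0 < W x)
    (hcub : ∀ p : MvPolynomial (Fin n) ℝ, p.totalDegree ≤ d + 2*t →
      (∫ x in usphere n, evp x p ∂(sphereMeasure n)) = ∑ x ∈ X, W x * evp x p)
    (g : MvPolynomial (Fin n) ℝ) (N : ℕ) (q : Fin N → MvPolynomial (Fin n) ℝ)
    (hg : g = ∑ i : Fin N, (q i)^2) (hq : ∀ i, (q i).totalDegree ≤ t)
    (hg1 : (∫ x in usphere n, evp x g ∂(sphereMeasure n)) = 1) :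
    αstar ≤ X.inf' hXne (fun x => evp x f) ∧
      X.inf' hXne (fun x => evp x f)
        ≤ ∫ x in usphere n, evp x f * evp x g ∂(sphereMeasure n) :=
  cubature_upper_bound_dominates_general n d t f hd αstar hα X hXne W hXs hW hcub g N q hg hq hg1
end
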